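/- In the setting of a linear model f_θ(x) = θᵀφ(x) with feature map φ, suppose one gradient descent step with learning rate η > 0 is taken on L(θ) = α·(𝔼_{x∼μ}[f_θ(x)] - 𝔼_{x∼ν}[f_θ(x)]) (the conservative regularizer alone, α > 0). Then the expected value of the updated model under μ decreases relative to the model updated without the regularizer by exactly η·α·(𝔼_{x∼μ, x'∼μ}[K(x,x')] - 𝔼_{x∼μ, x'∼ν}[K(x,x')]), and this quantity is nonnegative whenever the quadratic form of K satisfies (μ-ν)ᵀK(μ-ν) ≥ 0 and 𝔼_{x,x'∼ν}[K(x,x')] ≤ 𝔼_{x,x'∼μ}[K(x,x')]. -/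
import Mathlib


/-- One gradient step on the conservative regularizer alone pushes down
the model's expected value under the adversarial distribution μ. -/
theorem stmt_5 (n d : ℕ) (φ : (Fin n → ℝ) → (Fin d → ℝ))
    (fmodel : (Fin d → ℝ) → (Fin n → ℝ) → ℝ)
    (hf : ∀ θ x, fmodel θ x = ∑ j, θ j * φ x j)
    (K : (Fin n → ℝ) → (Fin n → ℝ) → ℝ)
    (hK : ∀ x x', K x x' = ∑ j, φ x j * φ x' j)
    (η α : ℝ) (hη : 0 < η) (hα : 0 < α)
    (m p : ℕ) (xμ : Fin m → (Fin n → ℝ)) (μw : Fin m → ℝ)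
    (xν : Fin p → (Fin n → ℝ)) (νw : Fin p → ℝ)
    (hμw : ∀ i, 0 ≤ μw i) (hμ1 : ∑ i, μw i = 1)
    (hνw : ∀ i, 0 ≤ νw i) (hν1 : ∑ i, νw i = 1)
    (θ θplus : Fin d → ℝ)
    (hplus : ∀ j, θplus j = θ j - η *
      (α * ((∑ i, μw i * φ (xμ i) j) - ∑ i, νw i * φ (xν i) j))) :
    ((∑ i, μw i * fmodel θ (xμ i)) - ∑ i, μw i * fmodel θplus (xμ i) =
      η * α * ((∑ i, ∑ i', μw i * μw i' * K (xμ i) (xμ i')) -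
        ∑ i, ∑ i', μw i * νw i' * K (xμ i) (xν i'))) ∧
    ((0 ≤ (∑ i, ∑ i', μw i * μw i' * K (xμ i) (xμ i')) -
        2 * (∑ i, ∑ i', μw i * νw i' * K (xμ i) (xν i')) +
        ∑ i, ∑ i', νw i * νw i' * K (xν i) (xν i')) →
      ((∑ i, ∑ i', νw i * νw i' * K (xν i) (xν i')) ≤
        ∑ i, ∑ i', μw i * μw i' * K (xμ i) (xμ i')) →
      0 ≤ η * α * ((∑ i, ∑ i', μw i * μw i' * K (xμ i) (xμ i')) -
        ∑ i, ∑ i', μw i * νw i' * K (xμ i) (xν i'))) := by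
  constructor
  · have key : ∀ i : Fin m, fmodel θ (xμ i) - fmodel θplus (xμ i) =
        η * α * ((∑ i', μw i' * K (xμ i) (xμ i')) - ∑ i', νw i' * K (xμ i) (xν i')) := by
      intro i
      rw [hf, hf, ← Finset.sum_sub_distrib]
      have h1 : ∀ j : Fin d, θ j * φ (xμ i) j - θplus j * φ (xμ i) j =
          η * α * ((∑ i', μw i' * φ (xμ i') j) * φ (xμ i) j
            - (∑ i', νw i' * φ (xν i') j) * φ (xμ i) j) := by
        intro j; rw [hplus]; ring
      rw [Finset.sum_congr rfl fun j _ => h1 j, ← Finset.mul_sum,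
        Finset.sum_sub_distrib]
      congr 2
      · simp only [hK, Finset.mul_sum, Finset.sum_mul]
        rw [Finset.sum_comm]
        exact Finset.sum_congr rfl fun i' _ => Finset.sum_congr rfl fun j _ => by ring
      · simp only [hK, Finset.mul_sum, Finset.sum_mul]
        rw [Finset.sum_comm]
        exact Finset.sum_congr rfl fun i' _ => Finset.sum_congr rfl fun j _ => by ring
    rw [← Finset.sum_sub_distrib]
    simp only [← mul_sub, Finset.sum_congr rfl fun i _ => congrArg (μw i * ·) (key i)]
    simp only [mul_sub, Finset.mul_sum, Finset.sum_sub_distrib]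
    congr 1 <;>
      exact Finset.sum_congr rfl fun i _ => Finset.sum_congr rfl fun i' _ => by ring
  · intro h1 h2
    apply mul_nonneg (by positivity)
    linarith
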